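/- arXiv:gr-qc/0109053 — 3 statements merged into one kernel-verified Lean document; each statement's English description precedes it below -/
import Mathlib

section
/- In a finite dag, any set of pairwise acausal edges together with the definition of locativity satisfies: every maximal spacelike slice is locative. -/
structure Dag (V E : Type) where
  src : E → Option V
  tgt : E → Option V

namespace Dag
variable {V E : Type}

/-- `v₁` immediately precedes `v₂`: there is a directed edge from `v₁` to `v₂`. -/
def prec (D : Dag V E) (a b : V) : Prop := ∃ e, D.src e = some a ∧ D.tgt e = some b

/-- Causal order on vertices: reflexive-transitive closure of immediate precedence. -/
def vle (D : Dag V E) : V → V → Prop := Relation.ReflTransGen D.prec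

/-- Acyclicity: no nontrivial directed cycle. -/
def Acyclic (D : Dag V E) : Prop := ∀ v : V, ¬ Relation.TransGen D.prec v v

/-- Edge `e₁` is to the past of edge `e₂`. -/
def epast (D : Dag V E) (e₁ e₂ : E) : Prop :=
  ∃ v₁ v₂, D.tgt e₁ = some v₁ ∧ D.src e₂ = some v₂ ∧ D.vle v₁ v₂

def Acausal (D : Dag V E) (e₁ e₂ : E) : Prop := ¬ D.epast e₁ e₂ ∧ ¬ D.epast e₂ e₁

/-- A spacelike slice: a set of pairwise acausal edges. -/
def IsSlice (D : Dag V E) (S : Set E) : Prop :=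
  ∀ e₁ ∈ S, ∀ e₂ ∈ S, e₁ ≠ e₂ → D.Acausal e₁ e₂

def InitialEdge (D : Dag V E) (e : E) : Prop := D.src e = none
def FinalEdge (D : Dag V E) (e : E) : Prop := D.tgt e = none

def incoming (D : Dag V E) (v : V) : Set E := {e | D.tgt e = some v}
def outgoing (D : Dag V E) (v : V) : Set E := {e | D.src e = some v}

/-- Vertex `v` is to the past of edge `e`. -/
def pastOfEdge (D : Dag V E) (v : V) (e : E) : Prop := ∃ w, D.src e = some w ∧ D.vle v w

/-- The set of vertices to the past of some edge of `L`. -/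
def pastVertices (D : Dag V E) (L : Set E) : Set V := {v | ∃ e ∈ L, D.pastOfEdge v e}

/-- The set of initial edges in the past of `L`. -/
def initPast (D : Dag V E) (L : Set E) : Set E :=
  {e | D.InitialEdge e ∧ (e ∈ L ∨ ∃ f ∈ L, D.epast e f)}

/-- A directed path of edges: consecutive edges share a vertex. -/
def ChainPath (D : Dag V E) (p : List E) : Prop :=
  List.Chain' (fun e f => ∃ v, D.tgt e = some v ∧ D.src f = some v) p

/-- The path passes only through vertices in `W`. -/
def Within (D : Dag V E) (W : Set V) (p : List E) : Prop :=
  ∀ e ∈ p.dropLast, ∀ v, D.tgt e = some v → v ∈ W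

/-- A directed path starting at an initial edge in the past of `L`, going only
through vertices to the past of `L`. -/
def GoodPath (D : Dag V E) (L : Set E) (p : List E) : Prop :=
  (∃ e, p.head? = some e ∧ e ∈ D.initPast L) ∧ D.ChainPath p ∧
    D.Within (D.pastVertices L) p

/-- A good path of maximal length. -/
def MaximalGoodPath (D : Dag V E) (L : Set E) (p : List E) : Prop :=
  D.GoodPath L p ∧ ∀ e', ¬ D.GoodPath L (p ++ [e'])

/-- A slice is locative if every maximal good path ends with an edge of `L`. -/
def Locative (D : Dag V E) (L : Set E) : Prop :=
  D.IsSlice L ∧ ∀ p, D.MaximalGoodPath L p → ∃ e ∈ L, p.getLast? = some e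

end Dag

/-- Every maximal spacelike slice of a finite dag is locative. -/
theorem maximal_slice_locative {V E : Type} [Fintype V] [Fintype E]
    (D : Dag V E) (hacyc : D.Acyclic) (L : Set E)
    (hslice : D.IsSlice L)
    (hmax : ∀ e ∉ L, ¬ D.IsSlice (insert e L)) :
    D.Locative L := by
  refine ⟨hslice, ?_⟩
  intro p hp
  obtain ⟨⟨hgood, hmaxp⟩⟩ : ∃ _ : D.MaximalGoodPath L p, True := ⟨hp, trivial⟩
  obtain ⟨⟨e₀, hhead, hinit⟩, hchain, hwithin⟩ := hgood
  have hne : p ≠ [] := by intro h; simp [h] at hhead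
  set g := p.getLast hne with hg
  have hlast : p.getLast? = some g := List.getLast?_eq_getLast hne
  refine ⟨g, ?_, hlast⟩
  by_contra hgL
  -- Step 1: the target of g is not in pastVertices L, else we could extend p.
  have htgt : ∀ v, D.tgt g = some v → v ∉ D.pastVertices L := by
    intro v hv hvpast
    obtain ⟨e', he'L, w, hsw, hvw⟩ := hvpast
    -- find an edge x with src x = some v whose addition keeps a good path
    have hx : ∃ x, D.src x = some v := by
      rcases (Relation.ReflTransGen.cases_head hvw) with heq | ⟨c, ⟨f, hf1, hf2⟩, _⟩
      · exact ⟨e', heq ▸ hsw⟩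
      · exact ⟨f, hf1⟩
    obtain ⟨x, hxsrc⟩ := hx
    apply hmaxp x
    refine ⟨⟨e₀, ?_, hinit⟩, ?_, ?_⟩
    · rcases p with _ | ⟨h0, t⟩
      · exact absurd rfl hne
      · simpa using hhead
    · refine List.isChain_append.mpr ⟨hchain, List.isChain_singleton x, ?_⟩
      intro a ha b hb
      rw [hlast] at ha
      simp at ha hb
      subst ha; subst hb
      exact ⟨v, hv, hxsrc⟩
    · intro f hf u hu
      rw [List.dropLast_concat] at hf
      have hsplit : p = p.dropLast ++ [g] := (List.dropLast_append_getLast hne).symm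
      rw [hsplit] at hf
      rcases List.mem_append.mp hf with hf | hf
      · exact hwithin f hf u hu
      · simp at hf
        subst hf
        rw [hv] at hu
        injection hu with hu
        subst hu
        exact ⟨e', he'L, w, hsw, hvw⟩
  -- Step 2: by maximality of the slice, some e ∈ L is causally related to g.
  have hrel : ∃ e ∈ L, D.epast g e ∨ D.epast e g := by
    have := hmax g hgL
    unfold Dag.IsSlice at this
    push_neg at this
    obtain ⟨e₁, he₁, e₂, he₂, hne12, hnac⟩ := this
    unfold Dag.Acausal at hnac
    rw [not_and_or, not_not, not_not] at hnac
    rcases Set.mem_insert_iff.mp he₁ with rfl | he₁L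
    · rcases Set.mem_insert_iff.mp he₂ with rfl | he₂L
      · exact absurd rfl hne12
      · rcases hnac with h | h
        · exact ⟨e₂, he₂L, Or.inl h⟩
        · exact ⟨e₂, he₂L, Or.inr h⟩
    · rcases Set.mem_insert_iff.mp he₂ with rfl | he₂L
      · rcases hnac with h | h
        · exact ⟨e₁, he₁L, Or.inr h⟩
        · exact ⟨e₁, he₁L, Or.inl h⟩
      · have hacaus := hslice e₁ he₁L e₂ he₂L hne12
        rcases hnac with h | h
        · exact absurd h hacaus.1
        · exact absurd h hacaus.2
  obtain ⟨e, heL, hcase⟩ := hrel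
  rcases hcase with ⟨v₁, v₂, ht, hs, hv⟩ | ⟨a, b, hta, hsb, hab⟩
  · -- g to the past of e: tgt g lands in pastVertices L, contradiction
    exact htgt v₁ ht ⟨e, heL, v₂, hs, hv⟩
  · -- e to the past of g
    have hsplit : p = p.dropLast ++ [g] := (List.dropLast_append_getLast hne).symm
    rcases hq : p.dropLast with _ | ⟨q0, qt⟩
    · -- p = [g]: g is initial, contradicting src g = some b
      have hp1 : p = [g] := by rw [hsplit, hq]; rfl
      have hge : g = e₀ := by rw [hp1] at hhead; simpa using hhead
      rw [← hge] at hinit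
      have : D.src g = none := hinit.1
      rw [this] at hsb; exact nomatch hsb
    · -- p has a second-to-last edge f
      have hqne : p.dropLast ≠ [] := by rw [hq]; simp
      set f := p.dropLast.getLast hqne with hf
      have hflast : p.dropLast.getLast? = some f := List.getLast?_eq_getLast hqne
      have hfmem : f ∈ p.dropLast := List.getLast_mem hqne
      have hchain' : D.ChainPath (p.dropLast ++ [g]) := by rw [← hsplit]; exact hchain
      obtain ⟨-, -, hrel⟩ := List.isChain_append.mp hchain'
      obtain ⟨w, hfw, hgw⟩ := hrel f hflast g (by simp)
      have hbw : b = w := by rw [hsb] at hgw; injection hgw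
      subst hbw
      obtain ⟨e', he'L, c, hsc, hwc⟩ := hwithin f hfmem b hfw
      have hac : D.vle a c := hab.trans hwc
      by_cases hee' : e = e'
      · subst hee'
        exact hacyc c (Relation.TransGen.head' ⟨e, hsc, hta⟩ hac)
      · exact (hslice e heL e' he'L hee').1 ⟨a, c, hta, hsc, hac⟩
end

section
/- Let L be a locative slice in a finite dag, and let u be a vertex that is minimal among the vertices strictly to the past of L. Then the set L' obtained from the set I of initial edges in the past of L by removing the incoming edges of u and adding the outgoing edges of u is again a spacelike and locative slice. -/
/-- Propagating the initial edges in the past of a locative slice through a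
minimal past vertex `u` yields again a spacelike, locative slice. -/
theorem propagate_min_vertex_locative {V E : Type} [Fintype V] [Fintype E]
    (D : Dag V E) (hacyc : D.Acyclic) (L : Set E) (hL : D.Locative L)
    (u : V) (hu : u ∈ D.pastVertices L)
    (hmin : ∀ w ∈ D.pastVertices L, D.vle w u → w = u) :
    D.IsSlice ((D.initPast L \ D.incoming u) ∪ D.outgoing u) ∧
      D.Locative ((D.initPast L \ D.incoming u) ∪ D.outgoing u) := by
  set L' := (D.initPast L \ D.incoming u) ∪ D.outgoing u with hL'
  -- minimality of u among all vertices ≤ u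
  have hmin' : ∀ v, D.vle v u → v = u := by
    intro v hv
    obtain ⟨e, heL, w, hsrc, hvle⟩ := hu
    exact hmin v ⟨e, heL, w, hsrc, hv.trans hvle⟩ hv
  -- u has an outgoing edge
  have hout : ∃ f, D.src f = some u := by
    obtain ⟨e, heL, w, hsrc, hvle⟩ := hu
    rcases hvle.cases_head with h | ⟨c, ⟨f, hf1, hf2⟩, _⟩
    · exact ⟨e, by rw [← h] at hsrc; exact hsrc⟩
    · exact ⟨f, hf1⟩
  -- every edge of L' with a source has source u
  have hsrcL' : ∀ e ∈ L', ∀ w, D.src e = some w → w = u := by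
    rintro e (⟨⟨hinit, _⟩, _⟩ | he) w hw
    · rw [Dag.InitialEdge] at hinit; rw [hinit] at hw; cases hw
    · have he' : D.src e = some u := he
      exact Option.some_inj.mp (hw.symm.trans he')
  -- no epast relation inside L'
  have hnoep : ∀ e₁ ∈ L', ∀ e₂ ∈ L', ¬ D.epast e₁ e₂ := by
    rintro e₁ he₁ e₂ he₂ ⟨v₁, v₂, ht, hs, hvle⟩
    have hv2 := hsrcL' e₂ he₂ v₂ hs
    rw [hv2] at hvle
    have hv1 := hmin' v₁ hvle
    rw [hv1] at ht
    rcases he₁ with ⟨_, hni⟩ | he₁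
    · exact hni ht
    · exact hacyc u (Relation.TransGen.single ⟨e₁, he₁, ht⟩)
  have hslice : D.IsSlice L' :=
    fun e₁ h₁ e₂ h₂ _ => ⟨hnoep e₁ h₁ e₂ h₂, hnoep e₂ h₂ e₁ h₁⟩
  refine ⟨hslice, hslice, ?_⟩
  -- every vertex to the past of L' is u
  have hpast : ∀ v ∈ D.pastVertices L', v = u := by
    rintro v ⟨e, he, w, hsw, hvw⟩
    have hwu := hsrcL' e he w hsw
    rw [hwu] at hvw
    exact hmin' v hvw
  -- initial edges in the past of L' are in L' or point at u
  have hinitP : ∀ e ∈ D.initPast L', e ∈ L' ∨ D.tgt e = some u := by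
    rintro e ⟨hinit, hel | ⟨f, hf, v₁, v₂, ht, hs, hvle⟩⟩
    · exact Or.inl hel
    · have h2 := hsrcL' f hf v₂ hs
      rw [h2] at hvle
      have h1 := hmin' v₁ hvle
      rw [h1] at ht
      exact Or.inr ht
  rintro p ⟨⟨⟨e, hhead, heip⟩, hchain, hwithin⟩, hmax⟩
  rcases List.eq_nil_or_concat p with rfl | ⟨q, f, rfl⟩
  · cases hhead
  rcases List.eq_nil_or_concat q with rfl | ⟨r, g, rfl⟩
  all_goals simp only [List.concat_eq_append] at hhead hchain hwithin hmax ⊢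
  · -- p = [f]
    simp only [List.nil_append, List.head?_cons] at hhead
    cases hhead
    rcases hinitP e heip with heL' | htgt
    · exact ⟨e, heL', rfl⟩
    · -- e is incoming to u: extend the path, contradiction with maximality
      exfalso
      obtain ⟨f₀, hf₀⟩ := hout
      have hf₀L' : f₀ ∈ L' := Or.inr hf₀
      refine hmax f₀ ⟨⟨e, rfl, heip⟩, ?_, ?_⟩
      · exact List.isChain_pair.mpr ⟨u, htgt, hf₀⟩
      · intro e' he' v hv
        have he'' : e' = e := by simpa using he'
        subst he''
        rw [htgt] at hv
        cases hv
        exact ⟨f₀, hf₀L', u, hf₀, Relation.ReflTransGen.refl⟩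
  · -- p = r ++ [g, f] : src f = tgt g = u
    have hgmem : g ∈ ((r ++ [g]) ++ [f]).dropLast := by
      rw [List.dropLast_concat]
      exact List.mem_append_right r (List.mem_singleton_self g)
    have hrel : ∃ v, D.tgt g = some v ∧ D.src f = some v := by
      replace hchain := List.isChain_append.mp hchain
      exact hchain.2.2 g (List.getLast?_concat (l := r)) f rfl
    obtain ⟨v, htg, hsf⟩ := hrel
    have hv : v = u := hpast v (hwithin g hgmem v htg)
    subst hv
    exact ⟨f, Or.inr hsf, List.getLast?_concat⟩
end

section
/- Diamond lemma for slice propagation: let S be a locative slice and u, v two distinct acausal vertices, each minimal among vertices to the future of S with all incoming edges in S. Then propagating through u then v yields the same slice as propagating through v first and then u, i.e., S_{uv} = S_{vu}, and the corresponding composite intervention operators on the associated Hilbert spaces are equal. -/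
open Matrix Kronecker BigOperators

/-- Diamond lemma for slice propagation: propagating a locative slice through
two distinct acausal minimal vertices `u`, `v` in either order yields the same
slice, and the corresponding composite intervention operators (the vertex
operators extended by identities, acting on disjoint tensor factors) agree. -/
theorem diamond_lemma {V E : Type} [Fintype V] [Fintype E]
    (D : Dag V E) (hacyc : D.Acyclic) (S : Set E) (hS : D.Locative S)
    (u v : V) (hne : u ≠ v) (h₁ : ¬ D.vle u v) (h₂ : ¬ D.vle v u)
    (huS : D.incoming u ⊆ S) (hvS : D.incoming v ⊆ S)
    (humin : ∀ w ∈ D.pastVertices (D.incoming u), w ∈ D.pastVertices S ∨ w = u)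
    (hvmin : ∀ w ∈ D.pastVertices (D.incoming v), w ∈ D.pastVertices S ∨ w = v)
    -- the Kraus families of the intervention operators at `u` and at `v`,
    -- acting on the disjoint tensor factors corresponding to the incoming
    -- edges of `u` and of `v` respectively
    {I J m m' k k' : Type} [Fintype I] [Fintype J]
    [Fintype m] [Fintype m'] [Fintype k] [Fintype k']
    [DecidableEq m] [DecidableEq m'] [DecidableEq k] [DecidableEq k']
    (A : I → Matrix m' m ℂ) (B : J → Matrix k' k ℂ)
    (hA : ∑ i, (A i)ᴴ * A i = 1) (hB : ∑ j, (B j)ᴴ * B j = 1) :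
    (((S \ D.incoming u) ∪ D.outgoing u) \ D.incoming v ∪ D.outgoing v
      = ((S \ D.incoming v) ∪ D.outgoing v) \ D.incoming u ∪ D.outgoing u)
    ∧ ∀ ρ : Matrix (m × k) (m × k) ℂ,
      ∑ j, ((1 : Matrix m' m' ℂ) ⊗ₖ B j) *
          (∑ i, (A i ⊗ₖ (1 : Matrix k k ℂ)) * ρ * (A i ⊗ₖ (1 : Matrix k k ℂ))ᴴ) *
          ((1 : Matrix m' m' ℂ) ⊗ₖ B j)ᴴ
        =
      ∑ i, (A i ⊗ₖ (1 : Matrix k' k' ℂ)) *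
          (∑ j, ((1 : Matrix m m ℂ) ⊗ₖ B j) * ρ * ((1 : Matrix m m ℂ) ⊗ₖ B j)ᴴ) *
          (A i ⊗ₖ (1 : Matrix k' k' ℂ))ᴴ := by
  constructor
  · -- set part
    have hiu_ov : ∀ e, e ∈ D.incoming u → e ∉ D.outgoing v := by
      intro e he hov
      exact h₂ (Relation.ReflTransGen.single ⟨e, hov, he⟩)
    have hiv_ou : ∀ e, e ∈ D.incoming v → e ∉ D.outgoing u := by
      intro e he hov
      exact h₁ (Relation.ReflTransGen.single ⟨e, hov, he⟩)
    have hiuiv : ∀ e, e ∈ D.incoming u → e ∉ D.incoming v := by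
      intro e he hv
      have : some u = some v := he ▸ hv ▸ rfl
      exact hne (Option.some.inj (he ▸ hv))
    ext e
    simp only [Set.mem_union, Set.mem_diff]
    have h1 := hiu_ov e
    have h2 := hiv_ou e
    have h3 := hiuiv e
    tauto
  · intro ρ
    have key : ∀ i j, ((1 : Matrix m' m' ℂ) ⊗ₖ B j) * (A i ⊗ₖ (1 : Matrix k k ℂ))
        = A i ⊗ₖ B j := by
      intro i j; rw [← Matrix.mul_kronecker_mul]; simp
    have key2 : ∀ i j, (A i ⊗ₖ (1 : Matrix k' k' ℂ)) * ((1 : Matrix m m ℂ) ⊗ₖ B j)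
        = A i ⊗ₖ B j := by
      intro i j; rw [← Matrix.mul_kronecker_mul]; simp
    calc ∑ j, ((1 : Matrix m' m' ℂ) ⊗ₖ B j) *
          (∑ i, (A i ⊗ₖ (1 : Matrix k k ℂ)) * ρ * (A i ⊗ₖ (1 : Matrix k k ℂ))ᴴ) *
          ((1 : Matrix m' m' ℂ) ⊗ₖ B j)ᴴ
        = ∑ j, ∑ i, (A i ⊗ₖ B j) * ρ * (A i ⊗ₖ B j)ᴴ := by
          apply Finset.sum_congr rfl; intro j _
          rw [Matrix.mul_sum, Matrix.sum_mul]
          apply Finset.sum_congr rfl; intro i _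
          rw [show ((1 : Matrix m' m' ℂ) ⊗ₖ B j) *
              ((A i ⊗ₖ (1 : Matrix k k ℂ)) * ρ * (A i ⊗ₖ (1 : Matrix k k ℂ))ᴴ) *
              ((1 : Matrix m' m' ℂ) ⊗ₖ B j)ᴴ
            = (((1 : Matrix m' m' ℂ) ⊗ₖ B j) * (A i ⊗ₖ (1 : Matrix k k ℂ))) * ρ *
              (((1 : Matrix m' m' ℂ) ⊗ₖ B j) * (A i ⊗ₖ (1 : Matrix k k ℂ)))ᴴ by
              rw [Matrix.conjTranspose_mul]; simp only [Matrix.mul_assoc]]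
          rw [key]
      _ = ∑ i, ∑ j, (A i ⊗ₖ B j) * ρ * (A i ⊗ₖ B j)ᴴ := by rw [Finset.sum_comm]
      _ = ∑ i, (A i ⊗ₖ (1 : Matrix k' k' ℂ)) *
          (∑ j, ((1 : Matrix m m ℂ) ⊗ₖ B j) * ρ * ((1 : Matrix m m ℂ) ⊗ₖ B j)ᴴ) *
          (A i ⊗ₖ (1 : Matrix k' k' ℂ))ᴴ := by
          apply Finset.sum_congr rfl; intro i _
          rw [Matrix.mul_sum, Matrix.sum_mul]
          apply Finset.sum_congr rfl; intro j _
          rw [show (A i ⊗ₖ (1 : Matrix k' k' ℂ)) *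
              (((1 : Matrix m m ℂ) ⊗ₖ B j) * ρ * ((1 : Matrix m m ℂ) ⊗ₖ B j)ᴴ) *
              (A i ⊗ₖ (1 : Matrix k' k' ℂ))ᴴ
            = ((A i ⊗ₖ (1 : Matrix k' k' ℂ)) * ((1 : Matrix m m ℂ) ⊗ₖ B j)) * ρ *
              ((A i ⊗ₖ (1 : Matrix k' k' ℂ)) * ((1 : Matrix m m ℂ) ⊗ₖ B j))ᴴ by
              rw [Matrix.conjTranspose_mul]; simp only [Matrix.mul_assoc]]
          rw [key2]
end
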